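/- (Single-valuedness Theorem I) Let A ⊆ ℕ be an infinite computably enumerable set, let θ be a quasi-Gödel numbering of S_A, and set W^A_i = {w : ℕ | ∃ x, θ i x = Part.some w}. Then there is a total computable sv : ℕ → ℕ such that for every i: (1) W^A_{sv i} is single-valued (for all x, y, y', if Nat.pair x y ∈ W^A_{sv i} and Nat.pair x y' ∈ W^A_{sv i} then y = y'); (2) W^A_{sv i} ⊆ W^A_i; (3) {x | ∃ y, Nat.pair x y ∈ W^A_{sv i}} = {x | ∃ y, Nat.pair x y ∈ W^A_i}; and (4) if W^A_i is single-valued then W^A_{sv i} = W^A_i. -/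

import Mathlib

/-- `r : ℕ →. ℕ` is an initial-segment function for `A`: its domain is empty or
equals `{m | m < a}` for some `a ∈ A`. -/
def IsInitSeg (A : Set ℕ) (r : ℕ →. ℕ) : Prop :=
  {x : ℕ | (r x).Dom} = (∅ : Set ℕ) ∨ ∃ a ∈ A, {x : ℕ | (r x).Dom} = {m : ℕ | m < a}

/-- `SA A` is the class of unary partial functions that are either total computable
or initial-segment functions for `A`. -/
def SA (A : Set ℕ) : Set (ℕ →. ℕ) :=
  {r | (∃ f : ℕ → ℕ, Computable f ∧ ∀ x, r x = Part.some (f x)) ∨ IsInitSeg A r}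

/-- The extended graph of a unary partial function. -/
def graphE (q : ℕ →. ℕ) : Set ℕ :=
  {n | ∃ y, n = Nat.pair y 0} ∪ {n | ∃ x z, q x = Part.some z ∧ n = Nat.pair x (z + 1)}

/-- The graph of a unary partial function. -/
def pgraph (q : ℕ →. ℕ) : Set ℕ :=
  {n | ∃ x z, q x = Part.some z ∧ n = Nat.pair x z}

/-- Condition (QGN I): the extended graph of the universal function of `θ` is
enumerated by a total computable function. -/
def QGN1 (θ : ℕ → ℕ →. ℕ) : Prop :=
  ∃ h : ℕ → ℕ, Computable h ∧
    Set.range h = {n | ∃ w, n = Nat.pair w 0} ∪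
      {n | ∃ i x z, θ i x = Part.some z ∧ n = Nat.pair (Nat.pair i x) (z + 1)}

/-- Condition (QGN II). -/
def QGN2 (A : Set ℕ) (θ : ℕ → ℕ →. ℕ) : Prop :=
  ∀ k : ℕ → ℕ → ℕ, Computable₂ k →
    ∃ v : ℕ → ℕ, Computable v ∧
      ∀ i, ∀ r ∈ SA A, Set.range (k i) = graphE r → θ (v i) = r

/-- A quasi-Gödel numbering of `SA A`. -/
def QuasiGodel (A : Set ℕ) (θ : ℕ → ℕ →. ℕ) : Prop :=
  Set.range θ = SA A ∧ QGN1 θ ∧ QGN2 A θ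

/-- A set of naturals is computably enumerable. -/
def CEset (C : Set ℕ) : Prop :=
  C = ∅ ∨ ∃ g : ℕ → ℕ, Computable g ∧ C = Set.range g

/-- The standard Gödel numbering of the unary partial recursive functions. -/
def phi (i : ℕ) : ℕ →. ℕ :=
  Nat.Partrec.Code.eval (Denumerable.ofNat Nat.Partrec.Code i)

/-- `WA θ i` is the `i`-th computably enumerable set, the range of `θ i`. -/
def WA (θ : ℕ → ℕ →. ℕ) (i : ℕ) : Set ℕ := {w : ℕ | ∃ x, θ i x = Part.some w}

/-- A set of (codes of) pairs is single-valued. -/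
def SingleValued (C : Set ℕ) : Prop :=
  ∀ x y y', Nat.pair x y ∈ C → Nat.pair x y' ∈ C → y = y'

/-!
Enumerate the graph of the universal function of `θ` by (QGN I) and keep a pair `⟪x, y⟫`
enumerated into `W_i` at stage `n` only if no earlier stage enumerated some `⟪x, y'⟫` with
`y' ≠ y` into `W_i`. The kept set is single-valued, lies in `W_i`, has the same domain (the first
stage carrying a given `x` is always kept) and is all of `W_i` when `W_i` is single-valued.
Keeping is decidable, so the kept set is either empty or the range of a total computable
function that repeats the value of the first kept stage; in both cases it is the range of a
member of `S_A` whose extended graph is uniformly enumerable, and (QGN II) turns this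
enumeration into the index `sv i`.
-/

section ComputablePred

variable {α β : Type*} [Primcodable α] [Primcodable β]

theorem ComputablePred.comp {p : β → Prop} {f : α → β} (hp : ComputablePred p)
    (hf : Computable f) : ComputablePred fun a => p (f a) := by
  obtain ⟨_, hp⟩ := hp
  exact (hp.comp hf).computablePred

protected theorem ComputablePred.and {p q : α → Prop} (hp : ComputablePred p)
    (hq : ComputablePred q) : ComputablePred fun a => p a ∧ q a := by
  classical
  refine Computable.computablePred (p := fun a => p a ∧ q a) ?_
  exact (Primrec.and.to_comp.comp hp.decide hq.decide).of_eq
    fun a => (Bool.decide_and _ _).symm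

theorem ComputablePred.eq {f g : α → ℕ} (hf : Computable f) (hg : Computable g) :
    ComputablePred fun a => f a = g a :=
  Primrec.eq.computablePred.comp (hf.pair hg)

theorem ComputablePred.forall_lt {p : α → ℕ → Prop}
    (hp : ComputablePred fun x : α × ℕ => p x.1 x.2) :
    ComputablePred fun x : α × ℕ => ∀ m < x.2, p x.1 m := by
  classical
  have hstep : Computable₂ fun (x : α × ℕ) (y : ℕ × Bool) => y.2 && decide (p x.1 y.1) :=
    Primrec.and.to_comp.comp (Computable.snd.comp Computable.snd)
      (hp.decide.comp (Computable.fst.comp Computable.fst |>.pair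
        (Computable.fst.comp Computable.snd)))
  refine Computable.computablePred
    ((Computable.nat_rec Computable.snd (Computable.const true) hstep).of_eq fun x => ?_)
  obtain ⟨a, n⟩ := x
  induction n with
  | zero => simp
  | succ n ih =>
    simp only [Nat.forall_lt_succ_right, Bool.decide_and] at ih ⊢
    rw [ih]

end ComputablePred

section FirstOfKey

variable (q : ℕ → Prop) (f : ℕ → ℕ)

def IsFirstOfKey (n : ℕ) : Prop :=
  q n ∧ ∀ m < n, q m → (f m).unpair.1 = (f n).unpair.1 → f m = f n

variable {q f}

theorem exists_isFirstOfKey {n : ℕ} (hn : q n) :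
    ∃ m, IsFirstOfKey q f m ∧ (f m).unpair.1 = (f n).unpair.1 := by
  classical
  have hkey : ∃ m, q m ∧ (f m).unpair.1 = (f n).unpair.1 := ⟨n, hn, rfl⟩
  obtain ⟨hq, hfkey⟩ := Nat.find_spec hkey
  refine ⟨Nat.find hkey, ⟨hq, fun m hm hqm hmkey => ?_⟩, hfkey⟩
  exact absurd ⟨hqm, hmkey.trans hfkey⟩ (Nat.find_min hkey hm)

theorem singleValued_image_isFirstOfKey : SingleValued (f '' {n | IsFirstOfKey q f n}) := by
  rintro x y y' ⟨n, hn, hfn⟩ ⟨n', hn', hfn'⟩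
  have hkey : (f n).unpair.1 = (f n').unpair.1 := by simp [hfn, hfn']
  have hf : f n = f n' := by
    rcases lt_trichotomy n n' with hlt | rfl | hlt
    · exact hn'.2 n hlt hn.1 hkey
    · rfl
    · exact (hn.2 n' hlt hn'.1 hkey.symm).symm
  exact (Nat.pair_eq_pair.mp (hfn.symm.trans (hf.trans hfn'))).2

theorem image_isFirstOfKey_subset : f '' {n | IsFirstOfKey q f n} ⊆ f '' {n | q n} :=
  Set.image_mono fun _ hn => hn.1

theorem dom_image_isFirstOfKey :
    {x | ∃ y, Nat.pair x y ∈ f '' {n | IsFirstOfKey q f n}} =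
      {x | ∃ y, Nat.pair x y ∈ f '' {n | q n}} := by
  refine subset_antisymm (fun x ⟨y, hy⟩ => ⟨y, image_isFirstOfKey_subset hy⟩) ?_
  rintro x ⟨y, n, hn, hfn⟩
  obtain ⟨m, hm, hkey⟩ := exists_isFirstOfKey (q := q) (f := f) hn
  simp only [hfn, Nat.unpair_pair] at hkey
  refine ⟨(f m).unpair.2, m, hm, ?_⟩
  rw [← hkey, Nat.pair_unpair]

theorem image_isFirstOfKey_eq_of_singleValued (h : SingleValued (f '' {n | q n})) :
    f '' {n | IsFirstOfKey q f n} = f '' {n | q n} := by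
  refine image_isFirstOfKey_subset.antisymm ?_
  rintro _ ⟨n, hn, rfl⟩
  obtain ⟨m, hm, hkey⟩ := exists_isFirstOfKey (q := q) (f := f) hn
  have hsnd : (f m).unpair.2 = (f n).unpair.2 :=
    h (f n).unpair.1 _ _ (by rw [← hkey, Nat.pair_unpair]; exact ⟨m, hm.1, rfl⟩)
      (by rw [Nat.pair_unpair]; exact ⟨n, hn, rfl⟩)
  exact ⟨m, hm, by rw [← Nat.pair_unpair (f m), hkey, hsnd, Nat.pair_unpair]⟩

theorem ComputablePred.isFirstOfKey {α : Type*} [Primcodable α] {q : α → ℕ → Prop}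
    (hq : ComputablePred fun x : α × ℕ => q x.1 x.2) {f : α → ℕ → ℕ} (hf : Computable₂ f) :
    ComputablePred fun x : α × ℕ => IsFirstOfKey (q x.1) (f x.1) x.2 := by
  open Computable in
  refine (hq.and ((ComputablePred.forall_lt (p := fun y m => ¬(q y.1 m ∧
      (f y.1 m).unpair.1 = (f y.1 y.2).unpair.1 ∧ f y.1 m ≠ f y.1 y.2)) ?_).comp
    (Computable.id.pair Computable.snd))).of_eq fun x => by simp [IsFirstOfKey]
  have hm : Computable fun z : (α × ℕ) × ℕ => f z.1.1 z.2 := hf.comp (fst.comp fst) snd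
  have hn : Computable fun z : (α × ℕ) × ℕ => f z.1.1 z.1.2 :=
    hf.comp (fst.comp fst) (snd.comp fst)
  exact ((hq.comp ((fst.comp fst).pair snd)).and
    ((ComputablePred.eq (fst.comp (unpair.comp hm)) (fst.comp (unpair.comp hn))).and
      (ComputablePred.eq hm hn).not)).not

end FirstOfKey

section GraphEnum

/-- Input `⟪0, y⟫` yields padding `⟪y, 0⟫`; input `⟪t + 1, ⟪x, s⟫⟫` yields `⟪x, z + 1⟫` when the
stage-`s` guess `L x s` is `some z`. -/
def graphEnum (L : ℕ → ℕ → Option ℕ) (n : ℕ) : ℕ :=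
  if n.unpair.1 = 0 then Nat.pair n.unpair.2 0
  else (L n.unpair.2.unpair.1 n.unpair.2.unpair.2).elim (Nat.pair 0 0)
    fun z => Nat.pair n.unpair.2.unpair.1 (z + 1)

theorem range_graphEnum {L : ℕ → ℕ → Option ℕ} {g : ℕ →. ℕ}
    (hL : ∀ x z, (∃ s, L x s = some z) ↔ g x = Part.some z) :
    Set.range (graphEnum L) = graphE g := by
  ext m
  constructor
  · rintro ⟨n, rfl⟩
    unfold graphEnum
    split_ifs
    · exact Or.inl ⟨_, rfl⟩
    · cases hLn : L n.unpair.2.unpair.1 n.unpair.2.unpair.2 with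
      | none => exact Or.inl ⟨0, rfl⟩
      | some z => exact Or.inr ⟨_, z, (hL _ z).1 ⟨_, hLn⟩, rfl⟩
  · rintro (⟨y, rfl⟩ | ⟨x, z, hz, rfl⟩)
    · exact ⟨Nat.pair 0 y, by simp [graphEnum]⟩
    · obtain ⟨s, hs⟩ := (hL x z).2 hz
      exact ⟨Nat.pair 1 (Nat.pair x s), by simp [graphEnum, hs]⟩

theorem computable₂_graphEnum {α : Type*} [Primcodable α] {L : α → ℕ → ℕ → Option ℕ}
    (hL : Computable fun y : α × ℕ × ℕ => L y.1 y.2.1 y.2.2) :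
    Computable₂ fun a => graphEnum (L a) := by
  open Computable in
  have hx : Computable fun y : α × ℕ => y.2.unpair.2.unpair.1 :=
    fst.comp (unpair.comp (snd.comp (unpair.comp snd)))
  have hs : Computable fun y : α × ℕ => y.2.unpair.2.unpair.2 :=
    snd.comp (unpair.comp (snd.comp (unpair.comp snd)))
  have hL' : Computable fun y : α × ℕ =>
      (L y.1 y.2.unpair.2.unpair.1 y.2.unpair.2.unpair.2).elim (Nat.pair 0 0)
        fun z => Nat.pair y.2.unpair.2.unpair.1 (z + 1) := by
    have hsome : Computable₂ fun (y : α × ℕ) (z : ℕ) =>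
        Nat.pair y.2.unpair.2.unpair.1 (z + 1) :=
      Primrec₂.natPair.to_comp.comp (hx.comp fst) (succ.comp snd)
    have hLy : Computable fun y : α × ℕ =>
        L y.1 y.2.unpair.2.unpair.1 y.2.unpair.2.unpair.2 :=
      hL.comp (fst.pair (hx.pair hs))
    exact (Computable.option_casesOn hLy (const (Nat.pair 0 0)) hsome).of_eq fun y => by
      cases L y.1 y.2.unpair.2.unpair.1 y.2.unpair.2.unpair.2 <;> rfl
  have hpad : Computable fun y : α × ℕ => Nat.pair y.2.unpair.2 0 :=
    Primrec₂.natPair.to_comp.comp (snd.comp (unpair.comp snd)) (const 0)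
  have htag : Computable fun y : α × ℕ => decide (y.2.unpair.1 = 0) :=
    (ComputablePred.eq (fst.comp (unpair.comp snd)) (const 0)).decide
  exact (Computable.cond htag hpad hL').of_eq fun y => by rw [Bool.cond_decide]; rfl

end GraphEnum

section ImageEnum

/-- The least witness of `p` is recognisable from below, so the fallback value of
`imageFun p f` appears at a finite stage. -/
def imageApprox (p : ℕ → Prop) [DecidablePred p] (f : ℕ → ℕ) (x s : ℕ) : Option ℕ :=
  if p x then some (f x) else if p s ∧ ∀ m < s, ¬p m then some (f s) else none

open Classical in
noncomputable def imageFun (p : ℕ → Prop) [DecidablePred p] (f : ℕ → ℕ) : ℕ →. ℕ :=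
  if h : ∃ n, p n then fun x => Part.some (if p x then f x else f (Nat.find h))
  else fun _ => Part.none

variable {p : ℕ → Prop} [DecidablePred p] {f : ℕ → ℕ}

theorem imageFun_of_exists (h : ∃ n, p n) :
    imageFun p f = fun x => Part.some (if p x then f x else f (Nat.find h)) :=
  dif_pos h

theorem imageFun_of_not_exists (h : ¬∃ n, p n) : imageFun p f = fun _ => Part.none :=
  dif_neg h

theorem exists_imageApprox_eq_some_iff (x z : ℕ) :
    (∃ s, imageApprox p f x s = some z) ↔ imageFun p f x = Part.some z := by
  by_cases h : ∃ n, p n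
  · rw [imageFun_of_exists h, Part.some_inj]
    by_cases hx : p x
    · simp [imageApprox, hx]
    · simp [imageApprox, hx, ← Nat.find_eq_iff h]
  · rw [imageFun_of_not_exists h]
    push Not at h
    simp [imageApprox, h]

theorem imageFun_mem_SA (A : Set ℕ) (hp : ComputablePred p) (hf : Computable f) :
    imageFun p f ∈ SA A := by
  by_cases h : ∃ n, p n
  · exact Or.inl ⟨_, ComputablePred.ite hf (Computable.const _) hp,
      fun x => by rw [imageFun_of_exists h]⟩
  · exact Or.inr (Or.inl (by simp [imageFun_of_not_exists h]))

theorem range_imageFun : {w | ∃ x, imageFun p f x = Part.some w} = f '' {n | p n} := by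
  by_cases h : ∃ n, p n
  · simp only [imageFun_of_exists h, Part.some_inj]
    ext w
    constructor
    · rintro ⟨x, rfl⟩
      split_ifs with hx
      exacts [⟨x, hx, rfl⟩, ⟨_, Nat.find_spec h, rfl⟩]
    · rintro ⟨n, hn, rfl⟩
      exact ⟨n, if_pos hn⟩
  · push Not at h
    simp [imageFun_of_not_exists (not_exists.mpr h), h]

theorem computable_imageApprox {α : Type*} [Primcodable α] {p : α → ℕ → Prop}
    [∀ a, DecidablePred (p a)] (hp : ComputablePred fun x : α × ℕ => p x.1 x.2)
    {f : α → ℕ → ℕ} (hf : Computable₂ f) :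
    Computable fun y : α × ℕ × ℕ => imageApprox (p y.1) (f y.1) y.2.1 y.2.2 := by
  open Computable in
  have hpx : ComputablePred fun y : α × ℕ × ℕ => p y.1 y.2.1 :=
    hp.comp (fst.pair (fst.comp snd))
  have hleast : ComputablePred fun y : α × ℕ × ℕ => p y.1 y.2.2 ∧ ∀ m < y.2.2, ¬p y.1 m :=
    (hp.comp (fst.pair (snd.comp snd))).and
      ((ComputablePred.forall_lt (p := fun a m => ¬p a m) hp.not).comp
        (fst.pair (snd.comp snd)))
  have hfx : Computable fun y : α × ℕ × ℕ => some (f y.1 y.2.1) :=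
    option_some.comp (hf.comp fst (fst.comp snd))
  have hfs : Computable fun y : α × ℕ × ℕ => some (f y.1 y.2.2) :=
    option_some.comp (hf.comp fst (snd.comp snd))
  exact (Computable.cond hpx.decide hfx
    (Computable.cond hleast.decide hfs (const none))).of_eq
      fun y => by simp only [imageApprox, Bool.cond_decide]

end ImageEnum

theorem QGN2.exists_computable_WA_eq_image {A : Set ℕ} {θ : ℕ → ℕ →. ℕ} (hθ : QGN2 A θ)
    {p : ℕ → ℕ → Prop} [∀ i, DecidablePred (p i)]
    (hp : ComputablePred fun x : ℕ × ℕ => p x.1 x.2)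
    {f : ℕ → ℕ → ℕ} (hf : Computable₂ f) :
    ∃ v : ℕ → ℕ, Computable v ∧ ∀ i, WA θ (v i) = f i '' {n | p i n} := by
  obtain ⟨v, hv, hθv⟩ := hθ _ (computable₂_graphEnum
    (L := fun i => imageApprox (p i) (f i)) (computable_imageApprox hp hf))
  refine ⟨v, hv, fun i => ?_⟩
  have hpi : ComputablePred (p i) := hp.comp ((Computable.const i).pair Computable.id)
  have hfi : Computable (f i) := hf.comp (Computable.const i) Computable.id
  rw [WA, hθv i _ (imageFun_mem_SA A hpi hfi)
    (range_graphEnum exists_imageApprox_eq_some_iff), range_imageFun]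

section Stages

variable {h : ℕ → ℕ}

/-- A stage of an enumeration as in `QGN1` is padding `⟪w, 0⟫` or reports `θ i x = z` as
`⟪⟪i, x⟫, z + 1⟫`. -/
def Hits (h : ℕ → ℕ) (i n : ℕ) : Prop := (h n).unpair.2 ≠ 0 ∧ (h n).unpair.1.unpair.1 = i

def hitValue (h : ℕ → ℕ) (n : ℕ) : ℕ := (h n).unpair.2 - 1

theorem WA_eq_image_hits {θ : ℕ → ℕ →. ℕ} (hr : Set.range h = {n | ∃ w, n = Nat.pair w 0} ∪
      {n | ∃ i x z, θ i x = Part.some z ∧ n = Nat.pair (Nat.pair i x) (z + 1)}) (i : ℕ) :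
    WA θ i = hitValue h '' {n | Hits h i n} := by
  ext w
  constructor
  · rintro ⟨x, hx⟩
    obtain ⟨n, hn⟩ : Nat.pair (Nat.pair i x) (w + 1) ∈ Set.range h :=
      hr ▸ Or.inr ⟨i, x, w, hx, rfl⟩
    exact ⟨n, by simp [Hits, hn], by simp [hitValue, hn]⟩
  · rintro ⟨n, ⟨hn0, rfl⟩, rfl⟩
    rcases (hr ▸ Set.mem_range_self n : h n ∈ _) with ⟨w, hw⟩ | ⟨i, x, z, hz, hn⟩
    · simp [hw] at hn0
    · exact ⟨x, by simpa [hitValue, hn] using hz⟩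

theorem computablePred_hits (hh : Computable h) :
    ComputablePred fun x : ℕ × ℕ => Hits h x.1 x.2 :=
  open Computable in
  (ComputablePred.eq (snd.comp (unpair.comp (hh.comp snd))) (const 0)).not.and
    (ComputablePred.eq (fst.comp (unpair.comp (fst.comp (unpair.comp (hh.comp snd))))) fst)

theorem computable_hitValue (hh : Computable h) : Computable (hitValue h) :=
  (Computable.pred.comp (Computable.snd.comp (Computable.unpair.comp hh))).of_eq fun _ => rfl

end Stages

theorem single_valuedness_I_general (A : Set ℕ) (θ : ℕ → ℕ →. ℕ) (hθ : QuasiGodel A θ) :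
    ∃ sv : ℕ → ℕ, Computable sv ∧ ∀ i,
      SingleValued (WA θ (sv i)) ∧
      WA θ (sv i) ⊆ WA θ i ∧
      {x : ℕ | ∃ y, Nat.pair x y ∈ WA θ (sv i)} = {x : ℕ | ∃ y, Nat.pair x y ∈ WA θ i} ∧
      (SingleValued (WA θ i) → WA θ (sv i) = WA θ i) := by
  classical
  obtain ⟨-, ⟨h, hh, hr⟩, hθ₂⟩ := hθ
  have hval : Computable₂ fun (_ : ℕ) => hitValue h :=
    (computable_hitValue hh).comp Computable.snd
  obtain ⟨v, hv, hWv⟩ := hθ₂.exists_computable_WA_eq_image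
    (p := fun i => IsFirstOfKey (Hits h i) (hitValue h))
    ((computablePred_hits hh).isFirstOfKey hval) hval
  refine ⟨v, hv, fun i => ?_⟩
  rw [hWv i, WA_eq_image_hits hr i]
  exact ⟨singleValued_image_isFirstOfKey, image_isFirstOfKey_subset, dom_image_isFirstOfKey,
    image_isFirstOfKey_eq_of_singleValued⟩

/-- Single-valuedness Theorem I. -/
theorem single_valuedness_I (A : Set ℕ) (hAinf : A.Infinite) (hAce : CEset A)
    (θ : ℕ → ℕ →. ℕ) (hθ : QuasiGodel A θ) :
    ∃ sv : ℕ → ℕ, Computable sv ∧ ∀ i,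
      SingleValued (WA θ (sv i)) ∧
      WA θ (sv i) ⊆ WA θ i ∧
      {x : ℕ | ∃ y, Nat.pair x y ∈ WA θ (sv i)} = {x : ℕ | ∃ y, Nat.pair x y ∈ WA θ i} ∧
      (SingleValued (WA θ i) → WA θ (sv i) = WA θ i) :=
  single_valuedness_I_general A θ hθ
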